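/- arXiv:2109.11703 — 3 statements merged into one kernel-verified Lean document; each statement's English description precedes it below -/
import Mathlib

section
/- Let A be an n×d matrix, B an ℓ×d matrix, and k < ℓ. Let π_B^k(A) denote the projection of the rows of A onto the span of the top-k right singular vectors of B. Then ‖A − π_B^k(A)‖_F² ≤ ‖A − A_k‖_F² + 2k · ‖A^T A − B^T B‖₂, where A_k is the best rank-k approximation of A. -/
open Matrix MeasureTheory

/-- Spectral (operator) norm of a real matrix, as the operator norm of the induced
Euclidean linear map. -/
noncomputable def specNorm {m n : Type*} [Fintype m] [Fintype n] [DecidableEq n]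
    (A : Matrix m n ℝ) : ℝ :=
  ‖LinearMap.toContinuousLinearMap (Matrix.toEuclideanLin A)‖

/-- Frobenius norm of a real matrix. -/
noncomputable def frobNorm {m n : Type*} [Fintype m] [Fintype n] (A : Matrix m n ℝ) : ℝ :=
  Real.sqrt (∑ i, ∑ j, (A i j) ^ 2)

/-- `Ak` is a best rank-`k` approximation of `A` in Frobenius norm. -/
def IsBestRankApprox {n d : Type*} [Fintype n] [Fintype d] [DecidableEq d]
    (A Ak : Matrix n d ℝ) (k : ℕ) : Prop :=
  Ak.rank ≤ k ∧ ∀ C : Matrix n d ℝ, C.rank ≤ k → frobNorm (A - Ak) ≤ frobNorm (A - C)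

/-- The `j`-th largest eigenvalue of a Hermitian matrix (eigenvalues sorted decreasingly). -/
noncomputable def sortedEigs {d : ℕ} {M : Matrix (Fin d) (Fin d) ℝ} (hM : M.IsHermitian)
    (j : Fin d) : ℝ :=
  ((List.ofFn hM.eigenvalues).insertionSort (· ≥ ·)).get
    ⟨j.1, by simp only [List.length_insertionSort, List.length_ofFn]; exact j.2⟩

namespace Stmt4Aux

lemma dot_self_nonneg {d : ℕ} (x : Fin d → ℝ) : 0 ≤ x ⬝ᵥ x :=
  Finset.sum_nonneg fun i _ => mul_self_nonneg _

lemma mulVec_dot {d k : ℕ} (V : Matrix (Fin d) (Fin k) ℝ) (b : Fin k → ℝ) (w : Fin d → ℝ) :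
    (V *ᵥ b) ⬝ᵥ w = b ⬝ᵥ (Vᵀ *ᵥ w) := by
  rw [dotProduct_comm, dotProduct_mulVec, ← mulVec_transpose, dotProduct_comm]

lemma frob_sq {n d : ℕ} (M : Matrix (Fin n) (Fin d) ℝ) :
    frobNorm M ^ 2 = ∑ i, (M i) ⬝ᵥ (M i) := by
  rw [frobNorm, Real.sq_sqrt (by positivity)]
  simp [dotProduct, sq]

lemma row_key {d k : ℕ} (Y : Matrix (Fin d) (Fin k) ℝ) (r s : Fin d → ℝ)
    (hs : s ᵥ* (Y * Yᵀ) = s) :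
    r ⬝ᵥ r - (r ᵥ* Y) ⬝ᵥ (r ᵥ* Y) ≤ (r - s) ⬝ᵥ (r - s) := by
  set c := r ᵥ* Y with hc
  set e := s ᵥ* Y with he
  have hse : e ᵥ* Yᵀ = s := by rw [he, vecMul_vecMul, hs]
  have h1 : r ⬝ᵥ s = c ⬝ᵥ e := by rw [← hse, vecMul_transpose, dotProduct_mulVec]
  have h2 : s ⬝ᵥ s = e ⬝ᵥ e := by
    nth_rewrite 2 [← hse]
    rw [vecMul_transpose, dotProduct_mulVec, ← he]
  have h3 : 0 ≤ (c - e) ⬝ᵥ (c - e) := dot_self_nonneg _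
  have e1 : (r - s) ⬝ᵥ (r - s) = r ⬝ᵥ r - 2 * (r ⬝ᵥ s) + s ⬝ᵥ s := by
    simp [sub_dotProduct, dotProduct_sub, dotProduct_comm s r]; ring
  have e2 : (c - e) ⬝ᵥ (c - e) = c ⬝ᵥ c - 2 * (c ⬝ᵥ e) + e ⬝ᵥ e := by
    simp [sub_dotProduct, dotProduct_sub, dotProduct_comm e c]; ring
  linarith [h3]

lemma row_proj {d k : ℕ} (Y : Matrix (Fin d) (Fin k) ℝ) (hY : Yᵀ * Y = 1) (r : Fin d → ℝ) :
    (r - r ᵥ* (Y * Yᵀ)) ⬝ᵥ (r - r ᵥ* (Y * Yᵀ)) = r ⬝ᵥ r - (r ᵥ* Y) ⬝ᵥ (r ᵥ* Y) := by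
  set c := r ᵥ* Y with hc
  have hs : r ᵥ* (Y * Yᵀ) = c ᵥ* Yᵀ := by rw [hc, vecMul_vecMul]
  have h1 : r ⬝ᵥ (c ᵥ* Yᵀ) = c ⬝ᵥ c := by rw [vecMul_transpose, dotProduct_mulVec]
  have h2 : (c ᵥ* Yᵀ) ⬝ᵥ (c ᵥ* Yᵀ) = c ⬝ᵥ c := by
    nth_rewrite 2 [vecMul_transpose]
    rw [dotProduct_mulVec, vecMul_vecMul, hY, vecMul_one]
  rw [hs]
  simp [sub_dotProduct, dotProduct_sub, h1, h2, dotProduct_comm (c ᵥ* Yᵀ) r]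

end Stmt4Aux

namespace Stmt4Aux

lemma row_mul {n d e : ℕ} (A : Matrix (Fin n) (Fin d) ℝ) (P : Matrix (Fin d) (Fin e) ℝ)
    (i : Fin n) : (A * P) i = (A i) ᵥ* P := by
  ext j; simp [Matrix.mul_apply, vecMul, dotProduct]

lemma sum_swap_energy {n d k : ℕ} (A : Matrix (Fin n) (Fin d) ℝ)
    (Y : Matrix (Fin d) (Fin k) ℝ) :
    ∑ i, ((A i) ᵥ* Y) ⬝ᵥ ((A i) ᵥ* Y) = ∑ j, (A *ᵥ (Yᵀ j)) ⬝ᵥ (A *ᵥ (Yᵀ j)) := by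
  simp only [dotProduct, vecMul, mulVec, transpose_apply]
  exact Finset.sum_comm

lemma frob_proj {n d k : ℕ} (A : Matrix (Fin n) (Fin d) ℝ)
    (Y : Matrix (Fin d) (Fin k) ℝ) (hY : Yᵀ * Y = 1) :
    frobNorm (A - A * (Y * Yᵀ)) ^ 2
      = frobNorm A ^ 2 - ∑ j, (A *ᵥ (Yᵀ j)) ⬝ᵥ (A *ᵥ (Yᵀ j)) := by
  rw [frob_sq, frob_sq, ← sum_swap_energy, ← Finset.sum_sub_distrib]
  refine Finset.sum_congr rfl fun i _ => ?_
  have hrow : (A - A * (Y * Yᵀ)) i = A i - (A i) ᵥ* (Y * Yᵀ) := by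
    rw [← row_mul]; rfl
  rw [hrow, row_proj Y hY (A i)]

lemma frob_low {n d k : ℕ} (A Ak : Matrix (Fin n) (Fin d) ℝ)
    (Y : Matrix (Fin d) (Fin k) ℝ) (hAkY : Ak * (Y * Yᵀ) = Ak) :
    frobNorm A ^ 2 - ∑ j, (A *ᵥ (Yᵀ j)) ⬝ᵥ (A *ᵥ (Yᵀ j)) ≤ frobNorm (A - Ak) ^ 2 := by
  rw [frob_sq, frob_sq, ← sum_swap_energy, ← Finset.sum_sub_distrib]
  refine Finset.sum_le_sum fun i _ => ?_
  have hrow : (A - Ak) i = A i - Ak i := rfl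
  have hs : (Ak i) ᵥ* (Y * Yᵀ) = Ak i := by
    rw [← row_mul, hAkY]
  rw [hrow]
  exact row_key Y (A i) (Ak i) hs

lemma spec_bound {d : ℕ} (M : Matrix (Fin d) (Fin d) ℝ) (x : Fin d → ℝ) :
    |x ⬝ᵥ (M *ᵥ x)| ≤ specNorm M * (x ⬝ᵥ x) := by
  set T := LinearMap.toContinuousLinearMap (Matrix.toEuclideanLin M) with hT
  set x' : EuclideanSpace ℝ (Fin d) := (WithLp.equiv 2 (Fin d → ℝ)).symm x with hx'
  have h1 : (inner ℝ x' (T x') : ℝ) = x ⬝ᵥ (M *ᵥ x) := by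
    simp [hT, hx', PiLp.inner_apply, RCLike.inner_apply', dotProduct,
      Matrix.toEuclideanLin_apply, mul_comm]
  have h2 : ‖x'‖ ^ 2 = x ⬝ᵥ x := by
    rw [← real_inner_self_eq_norm_sq]
    rw [hx', PiLp.inner_apply]; simp [RCLike.inner_apply', dotProduct, sq]
  calc |x ⬝ᵥ (M *ᵥ x)| = |(inner ℝ x' (T x') : ℝ)| := by rw [h1]
    _ ≤ ‖x'‖ * ‖T x'‖ := abs_real_inner_le_norm _ _
    _ ≤ ‖x'‖ * (‖T‖ * ‖x'‖) :=
        mul_le_mul_of_nonneg_left (T.le_opNorm x') (norm_nonneg _)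
    _ = specNorm M * (x ⬝ᵥ x) := by rw [specNorm, ← hT, ← h2]; ring

end Stmt4Aux

namespace Stmt4Aux

lemma col_unit {d k : ℕ} (Y : Matrix (Fin d) (Fin k) ℝ) (hY : Yᵀ * Y = 1) (i : Fin k) :
    (Yᵀ i) ⬝ᵥ (Yᵀ i) = 1 := by
  have h : (Yᵀ * Y) i i = (1 : Matrix (Fin k) (Fin k) ℝ) i i := by rw [hY]
  simpa [Matrix.mul_apply, dotProduct, Matrix.one_apply] using h

lemma kyfan {d k : ℕ} (M : Matrix (Fin d) (Fin d) ℝ) (hMs : Mᵀ = M)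
    (V Y : Matrix (Fin d) (Fin k) ℝ) (μ : Fin k → ℝ)
    (hV : Vᵀ * V = 1) (hY : Yᵀ * Y = 1) (heig : M * V = V * Matrix.diagonal μ)
    (htop : ∀ x : Fin d → ℝ, Vᵀ *ᵥ x = 0 → ∀ j : Fin k,
      x ⬝ᵥ (M *ᵥ x) ≤ μ j * (x ⬝ᵥ x)) :
    ∑ i, (Yᵀ i) ⬝ᵥ (M *ᵥ (Yᵀ i)) ≤ ∑ j, μ j := by
  rcases Nat.eq_zero_or_pos k with rfl | hkpos
  · simp
  obtain ⟨j₀, -, hj₀⟩ := Finset.exists_min_image Finset.univ μ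
    ⟨⟨0, hkpos⟩, Finset.mem_univ _⟩
  set a : Fin k → Fin k → ℝ := fun i => Vᵀ *ᵥ (Yᵀ i) with ha
  -- s_j ≤ 1
  have hs0 : ∀ j, 0 ≤ ∑ i, (a i j) ^ 2 :=
    fun j => Finset.sum_nonneg fun i _ => sq_nonneg _
  have hs1 : ∀ j, ∑ i, (a i j) ^ 2 ≤ 1 := by
    intro j
    set c : Fin k → ℝ := Yᵀ *ᵥ (Vᵀ j) with hcdef
    have hac : ∀ i, a i j = c i := by
      intro i
      simp only [ha, hcdef, mulVec, dotProduct, transpose_apply]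
      exact Finset.sum_congr rfl fun l _ => mul_comm _ _
    have hcc : ∑ i, (a i j) ^ 2 = c ⬝ᵥ c := by
      simp only [dotProduct, sq]
      exact Finset.sum_congr rfl fun i _ => by rw [hac i]
    have hpp : (Y *ᵥ c) ⬝ᵥ (Y *ᵥ c) = c ⬝ᵥ c := by
      rw [mulVec_dot, mulVec_mulVec, hY, one_mulVec]
    have hpv : (Y *ᵥ c) ⬝ᵥ (Vᵀ j) = c ⬝ᵥ c := by
      rw [mulVec_dot, ← hcdef]
    have hvv : (Vᵀ j) ⬝ᵥ (Vᵀ j) = 1 := col_unit V hV j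
    have hcs : ((Y *ᵥ c) ⬝ᵥ (Vᵀ j)) ^ 2
        ≤ ((Y *ᵥ c) ⬝ᵥ (Y *ᵥ c)) * ((Vᵀ j) ⬝ᵥ (Vᵀ j)) := by
      simpa [dotProduct, sq] using
        Finset.sum_mul_sq_le_sq_mul_sq Finset.univ (Y *ᵥ c) (Vᵀ j)
    rw [hpv, hpp, hvv, mul_one] at hcs
    have := dot_self_nonneg c
    rw [hcc]; nlinarith
  -- key per-row bound
  have key : ∀ i, (Yᵀ i) ⬝ᵥ (M *ᵥ (Yᵀ i)) ≤
      (∑ j, μ j * (a i j) ^ 2) + μ j₀ * (1 - ∑ j, (a i j) ^ 2) := by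
    intro i
    set y : Fin d → ℝ := Yᵀ i with hy
    set b : Fin k → ℝ := a i with hb
    set u : Fin d → ℝ := V *ᵥ b with hu
    set w : Fin d → ℝ := y - u with hw
    have hVty : Vᵀ *ᵥ y = b := rfl
    have hVtu : Vᵀ *ᵥ u = b := by
      rw [hu, mulVec_mulVec, hV, one_mulVec]
    have hw0 : Vᵀ *ᵥ w = 0 := by
      rw [hw, mulVec_sub, hVty, hVtu, sub_self]
    have hMu : M *ᵥ u = V *ᵥ (fun j => μ j * b j) := by
      have hdia : (Matrix.diagonal μ) *ᵥ b = fun j => μ j * b j := by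
        ext j; rw [mulVec_diagonal]
      rw [hu, mulVec_mulVec, heig, ← mulVec_mulVec, hdia]
    have huMu : u ⬝ᵥ (M *ᵥ u) = ∑ j, μ j * (b j) ^ 2 := by
      rw [hMu, dotProduct_comm, mulVec_dot, hVtu, dotProduct]
      exact Finset.sum_congr rfl fun j _ => by ring
    have huMw : u ⬝ᵥ (M *ᵥ w) = 0 := by
      have hVtMw : Vᵀ *ᵥ (M *ᵥ w) = 0 := by
        rw [mulVec_mulVec]
        have : Vᵀ * M = Matrix.diagonal μ * Vᵀ := by
          have := congrArg Matrix.transpose heig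
          rw [Matrix.transpose_mul, Matrix.transpose_mul, hMs,
            Matrix.diagonal_transpose] at this
          exact this
        rw [this, ← mulVec_mulVec, hw0, mulVec_zero]
      rw [hu, mulVec_dot, hVtMw, dotProduct_zero]
    have hwMu : w ⬝ᵥ (M *ᵥ u) = 0 := by
      rw [hMu, dotProduct_comm, mulVec_dot, hw0, dotProduct_zero]
    have hyy : y ⬝ᵥ y = 1 := col_unit Y hY i
    have hyu : y ⬝ᵥ u = b ⬝ᵥ b := by
      rw [dotProduct_comm, hu, mulVec_dot, hVty]
    have huu : u ⬝ᵥ u = b ⬝ᵥ b := by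
      nth_rewrite 1 [hu]
      rw [mulVec_dot, hVtu]
    have hww : w ⬝ᵥ w = 1 - ∑ j, (b j) ^ 2 := by
      have hbb : b ⬝ᵥ b = ∑ j, (b j) ^ 2 := by
        simp [dotProduct, sq]
      rw [hw]
      simp [sub_dotProduct, dotProduct_sub, hyy, hyu, huu, hbb,
        dotProduct_comm u y]
    have hwMw : w ⬝ᵥ (M *ᵥ w) ≤ μ j₀ * (1 - ∑ j, (b j) ^ 2) := by
      rw [← hww]; exact htop w hw0 j₀
    have hsplit : y ⬝ᵥ (M *ᵥ y) =
        u ⬝ᵥ (M *ᵥ u) + u ⬝ᵥ (M *ᵥ w) + w ⬝ᵥ (M *ᵥ u) + w ⬝ᵥ (M *ᵥ w) := by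
      have hyuw : y = u + w := by rw [hw]; abel
      rw [hyuw]
      simp only [mulVec_add, add_dotProduct, dotProduct_add]
      ring
    rw [hsplit, huMu, huMw, hwMu]
    linarith [hwMw]
  calc ∑ i, (Yᵀ i) ⬝ᵥ (M *ᵥ (Yᵀ i))
      ≤ ∑ i, ((∑ j, μ j * (a i j) ^ 2) + μ j₀ * (1 - ∑ j, (a i j) ^ 2)) :=
        Finset.sum_le_sum fun i _ => key i
    _ = ∑ j, (μ j * (∑ i, (a i j) ^ 2) + μ j₀ * (1 - ∑ i, (a i j) ^ 2)) := by
        simp only [Finset.sum_add_distrib, mul_sub, mul_one, Finset.sum_sub_distrib,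
          Finset.sum_const, Finset.card_univ, Fintype.card_fin, nsmul_eq_mul,
          Finset.mul_sum]
        rw [Finset.sum_comm (f := fun i j => μ j * a i j ^ 2),
          Finset.sum_comm (f := fun i j => μ j₀ * a i j ^ 2)]
    _ ≤ ∑ j, μ j := by
        refine Finset.sum_le_sum fun j _ => ?_
        have h1 := hs1 j
        have h0 := hs0 j
        have h2 := hj₀ j (Finset.mem_univ j)
        nlinarith

end Stmt4Aux

namespace Stmt4Aux

open Finset in
lemma pisum_apply {ι : Type*} (s : Finset ι) {δ : ℕ} (f : ι → EuclideanSpace ℝ (Fin δ))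
    (r : Fin δ) : (∑ j ∈ s, f j) r = ∑ j ∈ s, f j r := by
  classical
  induction s using Finset.induction with
  | empty => simp
  | insert _ _ h ih => rw [Finset.sum_insert h, Finset.sum_insert h, PiLp.add_apply, ih]

lemma exists_Y {nn d k : ℕ} (hkd : k ≤ d) (Ak : Matrix (Fin nn) (Fin d) ℝ)
    (hrank : Ak.rank ≤ k) :
    ∃ Y : Matrix (Fin d) (Fin k) ℝ, Yᵀ * Y = 1 ∧ Ak * (Y * Yᵀ) = Ak := by
  classical
  set E := EuclideanSpace ℝ (Fin d) with hE
  let eqv : (Fin d → ℝ) ≃ₗ[ℝ] E := (WithLp.linearEquiv 2 ℝ (Fin d → ℝ)).symm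
  set W : Submodule ℝ E :=
    (Submodule.span ℝ (Set.range fun i => Ak i)).map (eqv : (Fin d → ℝ) →ₗ[ℝ] E) with hW
  have hWrank : Module.finrank ℝ W ≤ k := by
    rw [hW, LinearEquiv.finrank_map_eq]
    have h1 : Submodule.span ℝ (Set.range fun i => Ak i)
        = LinearMap.range (Akᵀ.mulVecLin) := by
      rw [Matrix.range_mulVecLin]; rfl
    rw [h1]
    have h2 : Akᵀ.rank ≤ k := by rw [Matrix.rank_transpose]; exact hrank
    exact h2
  set m := Module.finrank ℝ W with hm
  have hmk : m ≤ k := hWrank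
  have hdim : m + Module.finrank ℝ Wᗮ = d := by
    have h := Submodule.finrank_add_finrank_orthogonal W
    rwa [finrank_euclideanSpace_fin] at h
  let bW : OrthonormalBasis (Fin m) ℝ W := stdOrthonormalBasis ℝ W
  let bC : OrthonormalBasis (Fin (Module.finrank ℝ Wᗮ)) ℝ Wᗮ := stdOrthonormalBasis ℝ Wᗮ
  set yf : ℕ → E := fun t =>
    if h : t < m then (bW ⟨t, h⟩ : E)
    else if h' : t - m < Module.finrank ℝ Wᗮ then (bC ⟨t - m, h'⟩ : E) else 0 with hyf
  have hyf_lt : ∀ (t : ℕ) (h : t < m), yf t = (bW ⟨t, h⟩ : E) := fun t h => dif_pos h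
  have hyf_mem : ∀ t : ℕ, m ≤ t → t < d → yf t ∈ Wᗮ := by
    intro t h1 h2
    have h' : t - m < Module.finrank ℝ Wᗮ := by omega
    rw [hyf]
    simp only
    rw [dif_neg (by omega), dif_pos h']
    exact (bC ⟨t - m, h'⟩).2
  have hbWo := bW.orthonormal
  have hbCo := bC.orthonormal
  rw [orthonormal_iff_ite] at hbWo hbCo
  have hortho : ∀ s t : ℕ, s < d → t < d →
      (inner ℝ (yf s) (yf t) : ℝ) = if s = t then 1 else 0 := by
    intro s t hs ht
    rcases lt_or_ge s m with h1 | h1 <;> rcases lt_or_ge t m with h2 | h2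
    · rw [hyf_lt s h1, hyf_lt t h2, ← Submodule.coe_inner, hbWo ⟨s, h1⟩ ⟨t, h2⟩]
      simp [Fin.mk.injEq]
    · rw [if_neg (by omega)]
      rw [hyf_lt s h1]
      exact Submodule.inner_right_of_mem_orthogonal (bW ⟨s, h1⟩).2 (hyf_mem t h2 ht)
    · rw [if_neg (by omega)]
      rw [hyf_lt t h2]
      exact Submodule.inner_left_of_mem_orthogonal (bW ⟨t, h2⟩).2 (hyf_mem s h1 hs)
    · have hs' : s - m < Module.finrank ℝ Wᗮ := by omega
      have ht' : t - m < Module.finrank ℝ Wᗮ := by omega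
      have es : yf s = (bC ⟨s - m, hs'⟩ : E) := by
        rw [hyf]; simp only; rw [dif_neg (by omega), dif_pos hs']
      have et : yf t = (bC ⟨t - m, ht'⟩ : E) := by
        rw [hyf]; simp only; rw [dif_neg (by omega), dif_pos ht']
      rw [es, et, ← Submodule.coe_inner, hbCo ⟨s - m, hs'⟩ ⟨t - m, ht'⟩]
      simp only [Fin.mk.injEq]
      by_cases hst : s = t
      · simp [hst]
      · rw [if_neg (by omega), if_neg hst]
  set Y : Matrix (Fin d) (Fin k) ℝ := Matrix.of fun (r : Fin d) (i : Fin k) => yf i r with hYdef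
  have hYa : ∀ (r : Fin d) (i : Fin k), Y r i = yf i r := fun _ _ => rfl
  have hinner : ∀ (x : E) (i : Fin k), (inner ℝ (yf i) x : ℝ) = ∑ l, Y l i * x l := by
    intro x i
    rw [PiLp.inner_apply]
    exact Finset.sum_congr rfl fun l _ => by rw [RCLike.inner_apply', conj_trivial, hYa]
  refine ⟨Y, ?_, ?_⟩
  · ext i i'
    have h1 : (Yᵀ * Y) i i' = (inner ℝ (yf i) (yf i') : ℝ) := by
      rw [Matrix.mul_apply, hinner (yf i') i]
      exact Finset.sum_congr rfl fun l _ => by rw [Matrix.transpose_apply, hYa, hYa]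
    rw [h1, hortho i i' (lt_of_lt_of_le i.2 hkd) (lt_of_lt_of_le i'.2 hkd),
      Matrix.one_apply]
    simp [Fin.val_inj]
  · ext i r
    set s : E := eqv (Ak i) with hsdef
    have hsl : ∀ l, s l = Ak i l := fun l => rfl
    have hsW : s ∈ W := Submodule.mem_map_of_mem (Submodule.subset_span ⟨i, rfl⟩)
    have hmain : ∑ j : Fin k, (inner ℝ (yf j) s : ℝ) • yf j = s := by
      have h1 : ∑ j : Fin k, (inner ℝ (yf j) s : ℝ) • yf j
          = ∑ t ∈ Finset.range k, (inner ℝ (yf t) s : ℝ) • yf t :=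
        Fin.sum_univ_eq_sum_range (fun t => (inner ℝ (yf t) s : ℝ) • yf t) k
      have h2 : ∑ t ∈ Finset.range m, (inner ℝ (yf t) s : ℝ) • yf t
          = ∑ t ∈ Finset.range k, (inner ℝ (yf t) s : ℝ) • yf t := by
        refine Finset.sum_subset (Finset.range_subset_range.2 hmk) ?_
        intro t ht htm
        rw [Finset.mem_range] at ht htm
        have : (inner ℝ (yf t) s : ℝ) = 0 :=
          Submodule.inner_left_of_mem_orthogonal hsW
            (hyf_mem t (by omega) (by omega))
        rw [this, zero_smul]
      have h3 : ∑ t ∈ Finset.range m, (inner ℝ (yf t) s : ℝ) • yf t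
          = ∑ a : Fin m, (inner ℝ ((bW a : E)) s : ℝ) • (bW a : E) := by
        rw [← Fin.sum_univ_eq_sum_range (fun t => (inner ℝ (yf t) s : ℝ) • yf t) m]
        refine Finset.sum_congr rfl fun a _ => ?_
        rw [hyf_lt a a.2]
      have h4 : ∑ a : Fin m, (inner ℝ ((bW a : E)) s : ℝ) • (bW a : E) = s := by
        have h5 := bW.sum_repr' (⟨s, hsW⟩ : W)
        have h6 := congrArg (Subtype.val : W → E) h5
        rw [Submodule.coe_sum] at h6
        simp only [Submodule.coe_smul, Submodule.coe_inner] at h6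
        exact h6
      rw [h1, ← h2, h3, h4]
    have h7 : (∑ j : Fin k, (inner ℝ (yf j) s : ℝ) • yf j) r = s r := by rw [hmain]
    rw [pisum_apply] at h7
    simp only [PiLp.smul_apply, smul_eq_mul] at h7
    rw [← Matrix.mul_assoc, Matrix.mul_apply]
    have h8 : ∀ j : Fin k, (Ak * Y) i j = (inner ℝ (yf j) s : ℝ) := by
      intro j
      rw [Matrix.mul_apply, hinner s j]
      exact Finset.sum_congr rfl fun l _ => by rw [hsl, hYa, mul_comm]
    calc ∑ j, (Ak * Y) i j * Yᵀ j r
        = ∑ j : Fin k, (inner ℝ (yf j) s : ℝ) * yf j r := by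
          refine Finset.sum_congr rfl fun j _ => ?_
          rw [h8 j, Matrix.transpose_apply, hYa]
      _ = s r := h7
      _ = Ak i r := hsl r

end Stmt4Aux

namespace Stmt4Aux

lemma energy {n d : ℕ} (A : Matrix (Fin n) (Fin d) ℝ) (x : Fin d → ℝ) :
    (A *ᵥ x) ⬝ᵥ (A *ᵥ x) = x ⬝ᵥ ((Aᵀ * A) *ᵥ x) := by
  rw [mulVec_dot, mulVec_mulVec]

end Stmt4Aux


open Stmt4Aux

/-- projection-error conversion lemma. `V` holds the top-`k` right singular
vectors of `B` (orthonormal eigenvectors of `BᵀB` whose eigenvalues dominate the Rayleigh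
quotient on the orthogonal complement), and `Ak` is a best rank-`k` approximation of `A`.
Then `‖A − π_B^k(A)‖_F² ≤ ‖A − A_k‖_F² + 2k‖AᵀA − BᵀB‖₂`. -/
theorem stmt4 {n d ℓ k : ℕ} (hk : k < ℓ)
    (A : Matrix (Fin n) (Fin d) ℝ) (B : Matrix (Fin ℓ) (Fin d) ℝ)
    (V : Matrix (Fin d) (Fin k) ℝ) (μ : Fin k → ℝ)
    (hV : Vᵀ * V = 1)
    (heig : Bᵀ * B * V = V * Matrix.diagonal μ)
    (htop : ∀ x : Fin d → ℝ, Vᵀ.mulVec x = 0 → ∀ j : Fin k,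
      x ⬝ᵥ (Bᵀ * B).mulVec x ≤ μ j * (x ⬝ᵥ x))
    (Ak : Matrix (Fin n) (Fin d) ℝ) (hAk : IsBestRankApprox A Ak k) :
    frobNorm (A - A * (V * Vᵀ)) ^ 2 ≤
      frobNorm (A - Ak) ^ 2 + 2 * k * specNorm (Aᵀ * A - Bᵀ * B) := by
  have hkd : k ≤ d := by
    calc k = (Vᵀ * V).rank := by rw [hV, Matrix.rank_one]; exact (Fintype.card_fin k).symm
      _ ≤ V.rank := Matrix.rank_mul_le_right _ _
      _ ≤ Fintype.card (Fin d) := V.rank_le_card_height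
      _ = d := Fintype.card_fin d
  obtain ⟨Y, hY, hAkY⟩ := exists_Y hkd Ak hAk.1
  set sp := specNorm (Aᵀ * A - Bᵀ * B) with hsp
  -- spectral comparison for unit vectors
  have hq : ∀ x : Fin d → ℝ, x ⬝ᵥ x = 1 →
      |x ⬝ᵥ ((Aᵀ * A) *ᵥ x) - x ⬝ᵥ ((Bᵀ * B) *ᵥ x)| ≤ sp := by
    intro x hx
    have h := spec_bound (Aᵀ * A - Bᵀ * B) x
    rw [hx, mul_one] at h
    have h2 : x ⬝ᵥ ((Aᵀ * A - Bᵀ * B) *ᵥ x)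
        = x ⬝ᵥ ((Aᵀ * A) *ᵥ x) - x ⬝ᵥ ((Bᵀ * B) *ᵥ x) := by
      rw [Matrix.sub_mulVec, dotProduct_sub]
    rwa [h2] at h
  -- Frobenius identities
  have E1 : frobNorm (A - A * (V * Vᵀ)) ^ 2
      = frobNorm A ^ 2 - ∑ j, (A *ᵥ (Vᵀ j)) ⬝ᵥ (A *ᵥ (Vᵀ j)) := frob_proj A V hV
  have E2 : frobNorm A ^ 2 - ∑ j, (A *ᵥ (Yᵀ j)) ⬝ᵥ (A *ᵥ (Yᵀ j))
      ≤ frobNorm (A - Ak) ^ 2 := frob_low A Ak Y hAkY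
  -- convert energies to quadratic forms
  have cV : ∀ j, (A *ᵥ (Vᵀ j)) ⬝ᵥ (A *ᵥ (Vᵀ j)) = (Vᵀ j) ⬝ᵥ ((Aᵀ * A) *ᵥ (Vᵀ j)) :=
    fun j => energy A (Vᵀ j)
  have cY : ∀ j, (A *ᵥ (Yᵀ j)) ⬝ᵥ (A *ᵥ (Yᵀ j)) = (Yᵀ j) ⬝ᵥ ((Aᵀ * A) *ᵥ (Yᵀ j)) :=
    fun j => energy A (Yᵀ j)
  -- Ky Fan
  have hMs : (Bᵀ * B)ᵀ = Bᵀ * B := by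
    rw [Matrix.transpose_mul, Matrix.transpose_transpose]
  have E4 : ∑ i, (Yᵀ i) ⬝ᵥ ((Bᵀ * B) *ᵥ (Yᵀ i)) ≤ ∑ j, μ j :=
    kyfan (Bᵀ * B) hMs V Y μ hV hY heig htop
  -- μ values are the V-energies of B
  have E5 : ∀ j, (Vᵀ j) ⬝ᵥ ((Bᵀ * B) *ᵥ (Vᵀ j)) = μ j := by
    intro j
    have hcol : (Bᵀ * B) *ᵥ (Vᵀ j) = μ j • (Vᵀ j) := by
      ext l
      have h := congrFun (congrFun heig l) j
      rw [Matrix.mul_apply, Matrix.mul_diagonal] at h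
      show ∑ t, (Bᵀ * B) l t * (Vᵀ j) t = _
      simp only [Matrix.transpose_apply, Pi.smul_apply, smul_eq_mul]
      rw [h]; exact mul_comm _ _
    rw [hcol, dotProduct_smul, smul_eq_mul, col_unit V hV j, mul_one]
  -- unit-norm columns
  have uV : ∀ j, (Vᵀ j) ⬝ᵥ (Vᵀ j) = 1 := col_unit V hV
  have uY : ∀ j, (Yᵀ j) ⬝ᵥ (Yᵀ j) = 1 := col_unit Y hY
  -- sum comparisons
  have E3 : ∑ i, (Yᵀ i) ⬝ᵥ ((Aᵀ * A) *ᵥ (Yᵀ i))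
      ≤ (∑ i, (Yᵀ i) ⬝ᵥ ((Bᵀ * B) *ᵥ (Yᵀ i))) + k * sp := by
    have h := Finset.sum_le_sum (s := Finset.univ)
      (f := fun i : Fin k => (Yᵀ i) ⬝ᵥ ((Aᵀ * A) *ᵥ (Yᵀ i)))
      (g := fun i : Fin k => (Yᵀ i) ⬝ᵥ ((Bᵀ * B) *ᵥ (Yᵀ i)) + sp)
      (fun i _ => by
        show (Yᵀ i) ⬝ᵥ ((Aᵀ * A) *ᵥ (Yᵀ i)) ≤ (Yᵀ i) ⬝ᵥ ((Bᵀ * B) *ᵥ (Yᵀ i)) + sp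
        have := abs_le.1 (hq (Yᵀ i) (uY i)); linarith [this.2])
    simpa [Finset.sum_add_distrib, Finset.card_univ, mul_comm] using h
  have E6 : ∑ j, (Vᵀ j) ⬝ᵥ ((Bᵀ * B) *ᵥ (Vᵀ j))
      ≤ (∑ j, (Vᵀ j) ⬝ᵥ ((Aᵀ * A) *ᵥ (Vᵀ j))) + k * sp := by
    have h := Finset.sum_le_sum (s := Finset.univ)
      (f := fun j : Fin k => (Vᵀ j) ⬝ᵥ ((Bᵀ * B) *ᵥ (Vᵀ j)))
      (g := fun j : Fin k => (Vᵀ j) ⬝ᵥ ((Aᵀ * A) *ᵥ (Vᵀ j)) + sp)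
      (fun j _ => by
        show (Vᵀ j) ⬝ᵥ ((Bᵀ * B) *ᵥ (Vᵀ j)) ≤ (Vᵀ j) ⬝ᵥ ((Aᵀ * A) *ᵥ (Vᵀ j)) + sp
        have := abs_le.1 (hq (Vᵀ j) (uV j)); linarith [this.1])
    simpa [Finset.sum_add_distrib, Finset.card_univ, mul_comm] using h
  have E5s : ∑ j, (Vᵀ j) ⬝ᵥ ((Bᵀ * B) *ᵥ (Vᵀ j)) = ∑ j, μ j :=
    Finset.sum_congr rfl fun j _ => E5 j
  rw [E1]
  simp only [cV] at *
  simp only [cY] at E2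
  linarith [E2, E3, E4, E6, E5s]
end

section
/- Let B be the sketch produced by the Frequent Directions algorithm with sketch size ℓ applied to an n×d matrix A. Then for any k < ℓ, ‖A^T A − B^T B‖₂ ≤ ‖A − A_k‖_F² / (ℓ − k). -/
/-! Each Frequent Directions step satisfies `BᵀB + aaᵀ = B'ᵀB' + δ VVᵀ` with `δ ≥ 0` and
`VᵀV = 1`, so telescoping over the rows of `A` gives `G := AᵀA - BᵀB = ∑ₜ δₜ VₜVₜᵀ`. Each
`VₜVₜᵀ` has spectral norm at most `1` and trace `ℓ`, hence `ℓ ‖G‖₂ ≤ ∑ₜ ℓ δₜ = tr G`.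
On the other hand, for any matrix `C` of rank `r`, projecting the rows of `A` and `B` onto the
row space of `C` (spanned by `r` orthonormal vectors `u`, each with `uᵀGu ≤ ‖G‖₂`) gives
`tr G ≤ ‖A - C‖_F² + r ‖G‖₂`. With `C = A_k` the two bounds combine to
`(ℓ - k) ‖G‖₂ ≤ ‖A - A_k‖_F²`. -/

open Matrix MeasureTheory

/-- One step of the (simple) Frequent Directions algorithm with sketch size `ℓ`:
the new row `a` is inserted into the (zero-valued) last row of `B`; an SVD of the
resulting matrix is computed (encoded by its Gram factorization with `V` having
orthonormal columns and decreasing nonnegative singular values `σ`); and the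
shrinkage `B' = sqrt(max(Σ² − σ_ℓ² I, 0)) Vᵀ` is performed. -/
def FDStep {ℓ d : ℕ} (hℓ : 0 < ℓ) (B B' : Matrix (Fin ℓ) (Fin d) ℝ)
    (a : Fin d → ℝ) : Prop :=
  B ⟨ℓ - 1, by omega⟩ = 0 ∧
  ∃ (σ : Fin ℓ → ℝ) (V : Matrix (Fin d) (Fin ℓ) ℝ),
    Vᵀ * V = 1 ∧ Antitone σ ∧ (∀ i, 0 ≤ σ i) ∧
    (B.updateRow ⟨ℓ - 1, by omega⟩ a)ᵀ * (B.updateRow ⟨ℓ - 1, by omega⟩ a) =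
      V * Matrix.diagonal (fun i => σ i ^ 2) * Vᵀ ∧
    B' = Matrix.diagonal
        (fun i => Real.sqrt (max (σ i ^ 2 - σ ⟨ℓ - 1, by omega⟩ ^ 2) 0)) * Vᵀ

open scoped Matrix.Norms.L2Operator RealInnerProductSpace

namespace Matrix

variable {m n : Type*} [Fintype m]

lemma transpose_mul_self_eq_sum_vecMulVec {R : Type*} [CommSemiring R] (M : Matrix m n R) :
    Mᵀ * M = ∑ i, vecMulVec (M i) (M i) := by
  ext
  simp [mul_apply, sum_apply, vecMulVec_apply]

lemma transpose_mul_self_updateRow {R : Type*} [CommSemiring R] [DecidableEq m]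
    (M : Matrix m n R) {r : m} (hr : M r = 0) (a : n → R) :
    (M.updateRow r a)ᵀ * M.updateRow r a = Mᵀ * M + vecMulVec a a := by
  simp only [transpose_mul_self_eq_sum_vecMulVec, Fintype.sum_eq_add_sum_compl r, updateRow_self,
    hr, zero_vecMulVec, zero_add]
  rw [add_comm]
  refine congrArg (· + _) (Finset.sum_congr rfl fun i hi => ?_)
  rw [updateRow_ne (Finset.mem_compl.1 hi ∘ Finset.mem_singleton.2)]

end Matrix

open WithLp (toLp)

lemma specNorm_eq_norm {m n : Type*} [Fintype m] [Fintype n] [DecidableEq n]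
    (A : Matrix m n ℝ) :
    specNorm A = ‖A‖ :=
  rfl

section OrthonormalColumns

variable {d c : Type*} [Fintype d] [Fintype c] [DecidableEq c]

lemma norm_mul_transpose_le_one [DecidableEq d] {V : Matrix d c ℝ} (hV : Vᵀ * V = 1) :
    ‖V * Vᵀ‖ ≤ 1 := by
  have hone : ‖(1 : Matrix c c ℝ)‖ ≤ 1 := by
    rw [cstar_norm_def, map_one]
    exact ContinuousLinearMap.norm_id_le
  calc ‖V * Vᵀ‖ = ‖V‖ * ‖V‖ := by
        rw [← l2_opNorm_conjTranspose V, ← l2_opNorm_conjTranspose_mul_self,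
          conjTranspose_conjTranspose, conjTranspose_eq_transpose_of_trivial]
    _ = ‖(1 : Matrix c c ℝ)‖ := by
        rw [← l2_opNorm_conjTranspose_mul_self, conjTranspose_eq_transpose_of_trivial, hV]
    _ ≤ 1 := hone

lemma trace_mul_transpose_eq_card {V : Matrix d c ℝ} (hV : Vᵀ * V = 1) :
    (V * Vᵀ).trace = Fintype.card c := by
  rw [trace_mul_comm, hV, trace_one]

lemma card_mul_norm_le_trace_sum_smul_mul_transpose [DecidableEq d] {ι : Type*} [Fintype ι]
    {δ : ι → ℝ} {V : ι → Matrix d c ℝ} (hδ : ∀ t, 0 ≤ δ t) (hV : ∀ t, (V t)ᵀ * V t = 1) :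
    Fintype.card c * ‖∑ t, δ t • (V t * (V t)ᵀ)‖ ≤ (∑ t, δ t • (V t * (V t)ᵀ)).trace := by
  have hnorm : ‖∑ t, δ t • (V t * (V t)ᵀ)‖ ≤ ∑ t, δ t :=
    calc ‖∑ t, δ t • (V t * (V t)ᵀ)‖ ≤ ∑ t, ‖δ t • (V t * (V t)ᵀ)‖ := norm_sum_le _ _
      _ ≤ ∑ t, δ t := Finset.sum_le_sum fun t _ => by
          rw [norm_smul, Real.norm_of_nonneg (hδ t)]
          exact mul_le_of_le_one_right (hδ t) (norm_mul_transpose_le_one (hV t))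
  calc Fintype.card c * ‖∑ t, δ t • (V t * (V t)ᵀ)‖ ≤ Fintype.card c * ∑ t, δ t := by gcongr
    _ = (∑ t, δ t • (V t * (V t)ᵀ)).trace := by
        simp only [trace_sum, trace_smul, trace_mul_transpose_eq_card (hV _), smul_eq_mul,
          Finset.sum_mul, mul_comm]

end OrthonormalColumns

section Rows

variable {m p d : Type*} [Fintype m] [Fintype p] [Fintype d]

lemma frobNorm_sq_eq_sum_norm_sq (M : Matrix m d ℝ) :
    frobNorm M ^ 2 = ∑ i, ‖toLp 2 (M i)‖ ^ 2 := by
  simp only [frobNorm, EuclideanSpace.real_norm_sq_eq]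
  exact Real.sq_sqrt (by positivity)

lemma trace_transpose_mul_self_eq_frobNorm_sq (M : Matrix m d ℝ) :
    (Mᵀ * M).trace = frobNorm M ^ 2 := by
  rw [frobNorm, Real.sq_sqrt (by positivity), trace, Finset.sum_comm]
  simp [mul_apply, sq]

variable [DecidableEq d]

lemma sum_inner_sq_eq_inner_toEuclideanCLM (M : Matrix m d ℝ) (x : EuclideanSpace ℝ d) :
    ∑ i, ⟪x, toLp 2 (M i)⟫ ^ 2 = ⟪x, toEuclideanCLM (𝕜 := ℝ) (Mᵀ * M) x⟫ := by
  rw [inner_toEuclideanCLM, ← mulVec_mulVec, dotProduct_mulVec, vecMul_transpose]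
  simp [EuclideanSpace.inner_eq_star_dotProduct, dotProduct, sq, mulVec]

lemma sum_inner_sq_sub_sum_inner_sq_le (A : Matrix m d ℝ) (B : Matrix p d ℝ)
    (x : EuclideanSpace ℝ d) :
    ∑ i, ⟪x, toLp 2 (A i)⟫ ^ 2 - ∑ i, ⟪x, toLp 2 (B i)⟫ ^ 2 ≤
      ‖Aᵀ * A - Bᵀ * B‖ * ‖x‖ ^ 2 := by
  rw [sum_inner_sq_eq_inner_toEuclideanCLM, sum_inner_sq_eq_inner_toEuclideanCLM,
    ← inner_sub_right, ← _root_.sub_apply, ← map_sub, cstar_norm_def]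
  calc _ ≤ ‖x‖ * ‖toEuclideanCLM (𝕜 := ℝ) (Aᵀ * A - Bᵀ * B) x‖ := real_inner_le_norm _ _
    _ ≤ ‖x‖ * (‖toEuclideanCLM (𝕜 := ℝ) (Aᵀ * A - Bᵀ * B)‖ * ‖x‖) := by
        gcongr; exact ContinuousLinearMap.le_opNorm _ _
    _ = _ := by ring

end Rows

section Projection

variable {E ι : Type*} [NormedAddCommGroup E] [InnerProductSpace ℝ E] {W : Submodule ℝ E}
  [W.HasOrthogonalProjection]

lemma OrthonormalBasis.sum_inner_sq_eq_norm_sq_starProjection [Fintype ι]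
    (b : OrthonormalBasis ι ℝ W) (a : E) :
    ∑ j, ⟪(b j : E), a⟫ ^ 2 = ‖W.starProjection a‖ ^ 2 := by
  simp_rw [← Submodule.inner_orthogonalProjectionOnto_eq_of_mem_left, b.sum_sq_inner_right]
  rfl

lemma Submodule.norm_sq_sub_norm_sq_starProjection_le (a : E) {c : E} (hc : c ∈ W) :
    ‖a‖ ^ 2 - ‖W.starProjection a‖ ^ 2 ≤ ‖a - c‖ ^ 2 := by
  have hperp : Wᗮ.starProjection a = Wᗮ.starProjection (a - c) := by
    rw [map_sub, starProjection_orthogonal_apply_eq_zero hc, sub_zero]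
  rw [W.norm_sq_eq_add_norm_sq_starProjection a, hperp, add_sub_cancel_left]
  gcongr
  exact Wᗮ.norm_starProjection_apply_le _

end Projection

theorem trace_sub_le_frobNorm_sq_add_rank_mul_norm {m p d : Type*} [Fintype m] [Fintype p]
    [Fintype d] [DecidableEq d] (A Ak : Matrix m d ℝ) (B : Matrix p d ℝ) :
    (Aᵀ * A - Bᵀ * B).trace ≤ frobNorm (A - Ak) ^ 2 + Ak.rank * ‖Aᵀ * A - Bᵀ * B‖ := by
  let W : Submodule ℝ (EuclideanSpace ℝ d) := Submodule.span ℝ (Set.range fun i => toLp 2 (Ak i))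
  have hrank : Module.finrank ℝ W = Ak.rank := by
    rw [rank_eq_finrank_span_row, ← (WithLp.linearEquiv 2 ℝ (d → ℝ)).finrank_map_eq,
      Submodule.map_span, ← Set.range_comp]
    rfl
  let b := stdOrthonormalBasis ℝ W
  have hA_dist : ∑ i, ‖toLp 2 (A i)‖ ^ 2 - ∑ i, ‖W.starProjection (toLp 2 (A i))‖ ^ 2 ≤
      frobNorm (A - Ak) ^ 2 := by
    rw [frobNorm_sq_eq_sum_norm_sq, ← Finset.sum_sub_distrib]
    refine Finset.sum_le_sum fun i _ => ?_
    rw [show toLp 2 ((A - Ak) i) = toLp 2 (A i) - toLp 2 (Ak i) from rfl]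
    exact W.norm_sq_sub_norm_sq_starProjection_le _ (Submodule.subset_span ⟨i, rfl⟩)
  have hB_bessel : ∑ i, ‖W.starProjection (toLp 2 (B i))‖ ^ 2 ≤ ∑ i, ‖toLp 2 (B i)‖ ^ 2 :=
    Finset.sum_le_sum fun i _ => by gcongr; exact W.norm_starProjection_apply_le _
  have hdir (j) : ∑ i, ⟪(b j : EuclideanSpace ℝ d), toLp 2 (A i)⟫ ^ 2 -
      ∑ i, ⟪(b j : EuclideanSpace ℝ d), toLp 2 (B i)⟫ ^ 2 ≤ ‖Aᵀ * A - Bᵀ * B‖ := by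
    have hunit : ‖(b j : EuclideanSpace ℝ d)‖ = 1 := b.orthonormal.1 j
    simpa [hunit] using sum_inner_sq_sub_sum_inner_sq_le A B (b j)
  have hproj : ∑ i, ‖W.starProjection (toLp 2 (A i))‖ ^ 2 -
      ∑ i, ‖W.starProjection (toLp 2 (B i))‖ ^ 2 ≤ Module.finrank ℝ W * ‖Aᵀ * A - Bᵀ * B‖ := by
    simp only [← b.sum_inner_sq_eq_norm_sq_starProjection]
    rw [Finset.sum_comm, Finset.sum_comm (γ := p), ← Finset.sum_sub_distrib]
    simpa using Finset.sum_le_sum (s := Finset.univ) fun j _ => hdir j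
  rw [trace_sub, trace_transpose_mul_self_eq_frobNorm_sq, trace_transpose_mul_self_eq_frobNorm_sq,
    frobNorm_sq_eq_sum_norm_sq, frobNorm_sq_eq_sum_norm_sq, ← hrank]
  linarith

lemma FDStep.exists_transpose_mul_self_add_vecMulVec_eq {ℓ d : ℕ} {hℓ : 0 < ℓ}
    {B B' : Matrix (Fin ℓ) (Fin d) ℝ} {a : Fin d → ℝ} (h : FDStep hℓ B B' a) :
    ∃ (δ : ℝ) (V : Matrix (Fin d) (Fin ℓ) ℝ), 0 ≤ δ ∧ Vᵀ * V = 1 ∧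
      Bᵀ * B + vecMulVec a a = B'ᵀ * B' + δ • (V * Vᵀ) := by
  obtain ⟨hlast, σ, V, hV, hσ_anti, hσ_nonneg, hsvd, rfl⟩ := h
  set δ := σ ⟨ℓ - 1, by omega⟩ ^ 2
  set D := diagonal fun i => √(max (σ i ^ 2 - δ) 0)
  have hδ_le (i : Fin ℓ) : δ ≤ σ i ^ 2 :=
    pow_le_pow_left₀ (hσ_nonneg _) (hσ_anti (Fin.le_def.2 (Nat.le_sub_one_of_lt i.2))) 2
  have hD : diagonal (fun i => σ i ^ 2) = D * D + δ • 1 := by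
    ext i j
    rcases eq_or_ne i j with rfl | hij
    · simp [D, Real.mul_self_sqrt, hδ_le]
    · simp [D, hij]
  refine ⟨δ, V, sq_nonneg _, hV, ?_⟩
  rw [← transpose_mul_self_updateRow B hlast, hsvd, hD]
  simp only [transpose_mul, transpose_transpose, D, diagonal_transpose, Matrix.mul_add,
    Matrix.add_mul, Matrix.mul_smul, Matrix.smul_mul, Matrix.mul_one, Matrix.mul_assoc]

lemma FDStep.exists_transpose_mul_self_sub_eq_sum {n ℓ d : ℕ} {hℓ : 0 < ℓ}
    {A : Matrix (Fin n) (Fin d) ℝ} {B : Fin (n + 1) → Matrix (Fin ℓ) (Fin d) ℝ} (hB0 : B 0 = 0)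
    (hstep : ∀ t : Fin n, FDStep hℓ (B t.castSucc) (B t.succ) (A t)) :
    ∃ (δ : Fin n → ℝ) (V : Fin n → Matrix (Fin d) (Fin ℓ) ℝ),
      (∀ t, 0 ≤ δ t) ∧ (∀ t, (V t)ᵀ * V t = 1) ∧
      Aᵀ * A - (B (Fin.last n))ᵀ * B (Fin.last n) = ∑ t, δ t • (V t * (V t)ᵀ) := by
  choose δ V hδ hV hgram using fun t => (hstep t).exists_transpose_mul_self_add_vecMulVec_eq
  refine ⟨δ, V, hδ, hV, ?_⟩
  set G := fun j => (B j)ᵀ * B j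
  have htelescope : ∑ t : Fin n, (G t.succ - G t.castSucc) = G (Fin.last n) := by
    have hsucc := Fin.sum_univ_succ G
    have hcastSucc := Fin.sum_univ_castSucc G
    simp only [G, hB0, transpose_zero, Matrix.zero_mul, zero_add] at hsucc hcastSucc ⊢
    rw [Finset.sum_sub_distrib, ← hsucc, hcastSucc, add_sub_cancel_left]
  have hrow (t : Fin n) :
      vecMulVec (A t) (A t) = G t.succ - G t.castSucc + δ t • (V t * (V t)ᵀ) := by
    rw [← add_sub_cancel_left (G t.castSucc) (vecMulVec (A t) (A t)), hgram t]
    abel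
  simp only [transpose_mul_self_eq_sum_vecMulVec A, hrow, Finset.sum_add_distrib, htelescope]
  abel

/-- the Frequent Directions sketch `B` (obtained by processing the rows of `A`
one at a time, starting from the zero sketch) satisfies
`‖AᵀA − BᵀB‖₂ ≤ ‖A − A_k‖_F² / (ℓ − k)` for every `k < ℓ`. -/
theorem stmt8 {n d ℓ k : ℕ} (hℓ : 0 < ℓ) (hk : k < ℓ)
    (A : Matrix (Fin n) (Fin d) ℝ)
    (B : Fin (n + 1) → Matrix (Fin ℓ) (Fin d) ℝ)
    (hB0 : B 0 = 0)
    (hstep : ∀ t : Fin n, FDStep hℓ (B t.castSucc) (B t.succ) (A t))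
    (Ak : Matrix (Fin n) (Fin d) ℝ) (hAk : IsBestRankApprox A Ak k) :
    specNorm (Aᵀ * A - (B (Fin.last n))ᵀ * B (Fin.last n)) ≤
      frobNorm (A - Ak) ^ 2 / ((ℓ : ℝ) - k) := by
  obtain ⟨δ, V, hδ, hV, hG⟩ := FDStep.exists_transpose_mul_self_sub_eq_sum hB0 hstep
  set G := Aᵀ * A - (B (Fin.last n))ᵀ * B (Fin.last n)
  have hnorm_le_trace : (ℓ : ℝ) * ‖G‖ ≤ G.trace := by
    rw [hG]
    simpa only [Fintype.card_fin] using card_mul_norm_le_trace_sum_smul_mul_transpose hδ hV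
  have htrace_le : G.trace ≤ frobNorm (A - Ak) ^ 2 + Ak.rank * ‖G‖ :=
    trace_sub_le_frobNorm_sq_add_rank_mul_norm A Ak (B (Fin.last n))
  have hrank : (Ak.rank : ℝ) * ‖G‖ ≤ k * ‖G‖ := by
    gcongr
    exact_mod_cast hAk.1
  rw [specNorm_eq_norm, le_div_iff₀ (sub_pos.2 (Nat.cast_lt.2 hk))]
  linarith
end

section
/- Let A be an n×d matrix with n ≥ some ℓ ≥ k ≥ 1, ℓ > k, and let B satisfy ‖A^T A − B^T B‖₂ ≤ α + ‖A − A_k‖_F²/(ℓ−k). Then the projection of A onto the top-k right singular vectors of B satisfies ‖A − π_B^k(A)‖_F² ≤ 2kα + ((ℓ+k)/(ℓ−k))·‖A − A_k‖_F². -/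
open Matrix MeasureTheory

lemma dot_eq_inner {d : ℕ} (x y : Fin d → ℝ) :
    x ⬝ᵥ y = (inner ℝ ((WithLp.equiv 2 (Fin d → ℝ)).symm x) ((WithLp.equiv 2 (Fin d → ℝ)).symm y) : ℝ) := by
  simp [dotProduct, PiLp.inner_apply, RCLike.inner_apply, mul_comm]

lemma specNorm_quad_le {d : ℕ} (E : Matrix (Fin d) (Fin d) ℝ) (x : Fin d → ℝ) :
    x ⬝ᵥ E.mulVec x ≤ specNorm E * (x ⬝ᵥ x) := by
  set x' : EuclideanSpace ℝ (Fin d) := (WithLp.equiv 2 (Fin d → ℝ)).symm x with hx'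
  have h1 : x ⬝ᵥ E.mulVec x = (inner ℝ x' (Matrix.toEuclideanLin E x') : ℝ) := by
    rw [dot_eq_inner, hx', WithLp.equiv_symm_apply, Matrix.toEuclideanLin_apply_piLp_toLp]
  have h2 : (inner ℝ x' (Matrix.toEuclideanLin E x') : ℝ) ≤ ‖x'‖ * ‖Matrix.toEuclideanLin E x'‖ :=
    real_inner_le_norm _ _
  have h3 : ‖Matrix.toEuclideanLin E x'‖ ≤ specNorm E * ‖x'‖ :=
    (LinearMap.toContinuousLinearMap (Matrix.toEuclideanLin E)).le_opNorm x'
  have h4 : (x ⬝ᵥ x) = ‖x'‖ ^ 2 := by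
    rw [dot_eq_inner, ← hx', real_inner_self_eq_norm_sq]
  calc x ⬝ᵥ E.mulVec x ≤ ‖x'‖ * (specNorm E * ‖x'‖) := by
        rw [h1]; exact h2.trans (by nlinarith [norm_nonneg x'])
    _ = specNorm E * (x ⬝ᵥ x) := by rw [h4]; ring

lemma frob_sq {n d : ℕ} (M : Matrix (Fin n) (Fin d) ℝ) :
    frobNorm M ^ 2 = (Mᵀ * M).trace := by
  unfold frobNorm
  rw [Real.sq_sqrt (by positivity)]
  simp only [Matrix.trace, Matrix.diag, Matrix.mul_apply, Matrix.transpose_apply]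
  rw [Finset.sum_comm]
  congr 1; ext i; congr 1; ext j; ring

lemma sum_fin_dite {M : Type*} [AddCommMonoid M] {k r : ℕ} (hrk : r ≤ k) (g : Fin r → M) :
    ∑ j : Fin k, (if h : (j : ℕ) < r then g ⟨j, h⟩ else 0) = ∑ i : Fin r, g i := by
  have h2 : ∑ i : Fin r, g i = ∑ i : Fin r, (fun m => if h : m < r then g ⟨m, h⟩ else 0) (i : ℕ) := by
    apply Finset.sum_congr rfl
    intro i _
    simp [i.2]
  rw [h2, Fin.sum_univ_eq_sum_range (fun m => if h : m < r then g ⟨m, h⟩ else 0) k,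
      Fin.sum_univ_eq_sum_range (fun m => if h : m < r then g ⟨m, h⟩ else 0) r]
  exact (Finset.sum_subset (Finset.range_subset_range.2 hrk) (by
    intro m _ hm
    rw [Finset.mem_range] at hm
    simp [hm])).symm

lemma frob_nonneg {m n : Type*} [Fintype m] [Fintype n] (A : Matrix m n ℝ) : 0 ≤ frobNorm A :=
  Real.sqrt_nonneg _

lemma trace_conj_nonneg {n d : ℕ} (M : Matrix (Fin n) (Fin d) ℝ) : 0 ≤ (Mᵀ * M).trace := by
  rw [← frob_sq]; positivity

lemma trace_proj {d k : ℕ} (G : Matrix (Fin d) (Fin d) ℝ) (U : Matrix (Fin d) (Fin k) ℝ) :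
    (G * (U * Uᵀ)).trace = (Uᵀ * G * U).trace := by
  rw [← Matrix.mul_assoc, Matrix.trace_mul_comm (G * U) Uᵀ, Matrix.mul_assoc]

lemma trace_quad {d k : ℕ} (G : Matrix (Fin d) (Fin d) ℝ) (U : Matrix (Fin d) (Fin k) ℝ) :
    (Uᵀ * G * U).trace = ∑ j : Fin k, (fun i => U i j) ⬝ᵥ G.mulVec (fun i => U i j) := by
  simp only [Matrix.trace, Matrix.diag, Matrix.mul_apply, Matrix.transpose_apply,
    dotProduct, Matrix.mulVec, Finset.sum_mul, Finset.mul_sum]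
  congr 1; ext j
  rw [Finset.sum_comm]
  congr 1; ext i; congr 1; ext l; ring

lemma dotProduct_sum' {d k : ℕ} (x : Fin d → ℝ) (f : Fin k → (Fin d → ℝ)) :
    x ⬝ᵥ (∑ j, f j) = ∑ j, x ⬝ᵥ f j := by
  simp only [dotProduct, Finset.sum_apply, Finset.mul_sum]
  rw [Finset.sum_comm]

lemma sum_dotProduct' {d k : ℕ} (x : Fin d → ℝ) (f : Fin k → (Fin d → ℝ)) :
    (∑ j, f j) ⬝ᵥ x = ∑ j, f j ⬝ᵥ x := by
  simp only [dotProduct, Finset.sum_apply, Finset.sum_mul]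
  rw [Finset.sum_comm]

lemma bessel_aux {d k : ℕ} (w : Fin k → (Fin d → ℝ)) (e : Fin k → ℝ)
    (hw : ∀ i j, w i ⬝ᵥ w j = if i = j then e i else 0) (he : ∀ i, e i = 0 ∨ e i = 1)
    (x : Fin d → ℝ) : ∑ j, (x ⬝ᵥ w j) ^ 2 ≤ x ⬝ᵥ x := by
  classical
  have hze : ∀ j, e j = 0 → w j = 0 := by
    intro j hj
    have h := hw j j
    rw [if_pos rfl, hj] at h
    exact dotProduct_self_eq_zero.mp h
  set c : Fin k → ℝ := fun j => x ⬝ᵥ w j with hc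
  have hcc : ∀ j, c j = x ⬝ᵥ w j := fun j => rfl
  have hterm : ∀ j l : Fin k, (c j • w j) ⬝ᵥ (c l • w l) = if j = l then c j ^ 2 else 0 := by
    intro j l
    rw [smul_dotProduct, dotProduct_smul, hw j l]
    by_cases hjl : j = l
    · subst hjl
      rcases he j with h | h
      · have hz := hze j h
        simp [hcc, hz]
      · simp [h, smul_eq_mul]; ring
    · simp [hjl]
  have hdouble : (∑ j, c j • w j) ⬝ᵥ (∑ l, c l • w l) = ∑ j, c j ^ 2 := by
    rw [sum_dotProduct']
    apply Finset.sum_congr rfl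
    intro j _
    rw [dotProduct_sum']
    rw [Finset.sum_congr rfl (fun l _ => hterm j l)]
    simp
  have hx1 : x ⬝ᵥ (∑ j, c j • w j) = ∑ j, c j ^ 2 := by
    rw [dotProduct_sum']
    apply Finset.sum_congr rfl
    intro j _
    rw [dotProduct_smul, smul_eq_mul, ← hcc]
    ring
  have hx2 : (∑ j, c j • w j) ⬝ᵥ x = ∑ j, c j ^ 2 := by
    rw [dotProduct_comm]; exact hx1
  have key : (x - ∑ j, c j • w j) ⬝ᵥ (x - ∑ j, c j • w j) = x ⬝ᵥ x - ∑ j, c j ^ 2 := by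
    rw [sub_dotProduct, dotProduct_sub, dotProduct_sub, hx1, hx2, hdouble]
    ring
  have h0 : 0 ≤ (x - ∑ j, c j • w j) ⬝ᵥ (x - ∑ j, c j • w j) := by
    simp only [dotProduct]
    apply Finset.sum_nonneg
    intro i _
    exact mul_self_nonneg _
  have : ∑ j, c j ^ 2 ≤ x ⬝ᵥ x := by linarith [key ▸ h0]
  simpa [hc] using this

lemma exists_proj_basis {n d k : ℕ} (Ak : Matrix (Fin n) (Fin d) ℝ) (hrank : Ak.rank ≤ k) :
    ∃ (w : Fin k → (Fin d → ℝ)) (e : Fin k → ℝ),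
      (∀ i j, w i ⬝ᵥ w j = if i = j then e i else 0) ∧
      (∀ i, e i = 0 ∨ e i = 1) ∧
      (∀ i0 : Fin n, ∑ j, (Ak i0 ⬝ᵥ w j) • w j = Ak i0) := by
  classical
  set eL : (Fin d → ℝ) ≃ₗ[ℝ] EuclideanSpace ℝ (Fin d) :=
    (WithLp.linearEquiv 2 ℝ (Fin d → ℝ)).symm with heL
  have hdi : ∀ x y : Fin d → ℝ, x ⬝ᵥ y = (inner ℝ (eL x) (eL y) : ℝ) := fun x y =>
    dot_eq_inner x y
  set S0 : Submodule ℝ (Fin d → ℝ) := Submodule.span ℝ (Set.range Ak) with hS0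
  have hfr0 : Module.finrank ℝ S0 ≤ k := by
    have h1 := Matrix.rank_eq_finrank_span_cols Akᵀ
    rw [Matrix.rank_transpose] at h1
    rw [hS0]; refine le_of_eq_of_le h1.symm ?_
    exact hrank
  set S : Submodule ℝ (EuclideanSpace ℝ (Fin d)) := S0.map (eL : (Fin d → ℝ) →ₗ[ℝ] _) with hS
  have hfr : Module.finrank ℝ S = Module.finrank ℝ S0 := LinearEquiv.finrank_map_eq eL S0
  set r := Module.finrank ℝ S with hr'
  have hr : r ≤ k := by rw [hfr]; exact hfr0
  set b := stdOrthonormalBasis ℝ S with hb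
  set w : Fin k → (Fin d → ℝ) := fun j =>
    if h : (j : ℕ) < r then eL.symm ((b ⟨j, h⟩ : S) : EuclideanSpace ℝ (Fin d)) else 0 with hw
  set e : Fin k → ℝ := fun j => if (j : ℕ) < r then 1 else 0 with he
  have hbo := orthonormal_iff_ite.mp b.orthonormal
  refine ⟨w, e, ?_, fun i => by by_cases h : (i : ℕ) < r <;> simp [he, h], ?_⟩
  · intro i j
    by_cases hi : (i : ℕ) < r
    · by_cases hj : (j : ℕ) < r
      · rw [hdi]
        simp only [hw, hi, hj, dif_pos, LinearEquiv.apply_symm_apply]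
        rw [← Submodule.coe_inner, hbo]
        simp only [he, hi, if_true]
        by_cases hij : i = j
        · subst hij; simp
        · have : (⟨(i : ℕ), hi⟩ : Fin r) ≠ ⟨(j : ℕ), hj⟩ := by
            simp [Fin.ext_iff, Fin.val_ne_of_ne hij]
          simp [this, hij]
      · have hwj : w j = 0 := by simp [hw, hj]
        have hij : i ≠ j := fun h => hj (h ▸ hi)
        simp [hwj, hij]
    · have hwi : w i = 0 := by simp [hw, hi]
      by_cases hij : i = j
      · subst hij; simp [hwi, he, hi]
      · simp [hwi, hij]
  · intro i0
    have haS0 : Ak i0 ∈ S0 := Submodule.subset_span ⟨i0, rfl⟩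
    have haS : eL (Ak i0) ∈ S := Submodule.mem_map_of_mem haS0
    set as : S := ⟨eL (Ak i0), haS⟩ with has
    have hsum := b.sum_repr' as
    have hsum2 : ∑ i : Fin r, (inner ℝ ((b i : S) : EuclideanSpace ℝ (Fin d)) (eL (Ak i0)) : ℝ) •
        ((b i : S) : EuclideanSpace ℝ (Fin d)) = eL (Ak i0) := by
      have := congrArg (Subtype.val) hsum
      rw [Submodule.coe_sum] at this
      simpa [Submodule.coe_inner] using this
    have hsum3 : ∑ i : Fin r, (inner ℝ ((b i : S) : EuclideanSpace ℝ (Fin d)) (eL (Ak i0)) : ℝ) •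
        eL.symm ((b i : S) : EuclideanSpace ℝ (Fin d)) = Ak i0 := by
      have := congrArg eL.symm hsum2
      rw [map_sum] at this
      simpa [_root_.map_smul] using this
    set g : Fin r → (Fin d → ℝ) := fun i =>
      (inner ℝ ((b i : S) : EuclideanSpace ℝ (Fin d)) (eL (Ak i0)) : ℝ) •
        eL.symm ((b i : S) : EuclideanSpace ℝ (Fin d)) with hg
    have hterm : ∀ j : Fin k, (Ak i0 ⬝ᵥ w j) • w j =
        if h : (j : ℕ) < r then g ⟨j, h⟩ else 0 := by
      intro j
      by_cases hj : (j : ℕ) < r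
      · simp only [hw, hj, dif_pos, hg]
        rw [hdi]
        rw [LinearEquiv.apply_symm_apply, real_inner_comm]
      · simp [hw, hj]
    rw [Finset.sum_congr rfl (fun j _ => hterm j), sum_fin_dite hr g]
    exact hsum3

lemma specNorm_neg {d : ℕ} (M : Matrix (Fin d) (Fin d) ℝ) : specNorm (-M) = specNorm M := by
  unfold specNorm
  rw [map_neg, map_neg, norm_neg]

lemma quad_lower {d : ℕ} (M : Matrix (Fin d) (Fin d) ℝ) (x : Fin d → ℝ) :
    -(specNorm M * (x ⬝ᵥ x)) ≤ x ⬝ᵥ M.mulVec x := by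
  have h := specNorm_quad_le (-M) x
  rw [specNorm_neg, Matrix.neg_mulVec, dotProduct_neg] at h
  linarith

lemma gram_quad {ℓb d : ℕ} (B : Matrix (Fin ℓb) (Fin d) ℝ) (x : Fin d → ℝ) :
    x ⬝ᵥ (Bᵀ * B).mulVec x = B.mulVec x ⬝ᵥ B.mulVec x := by
  rw [← Matrix.mulVec_mulVec, Matrix.dotProduct_mulVec, Matrix.vecMul_transpose]

lemma quad_apply {d k : ℕ} (G : Matrix (Fin d) (Fin d) ℝ) (U : Matrix (Fin d) (Fin k) ℝ)
    (j : Fin k) : (Uᵀ * G * U) j j = (fun i => U i j) ⬝ᵥ G.mulVec (fun i => U i j) := by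
  simp only [Matrix.mul_apply, Matrix.transpose_apply, dotProduct, Matrix.mulVec,
    Finset.sum_mul, Finset.mul_sum]
  rw [Finset.sum_comm]
  congr 1; ext i; congr 1; ext l; ring

lemma col_dot {d k : ℕ} (U : Matrix (Fin d) (Fin k) ℝ) (i j : Fin k) :
    (fun m => U m i) ⬝ᵥ (fun m => U m j) = (Uᵀ * U) i j := by
  simp [Matrix.mul_apply, dotProduct]

lemma col_mulVec {d k m : ℕ} (M : Matrix (Fin m) (Fin d) ℝ) (N : Matrix (Fin d) (Fin k) ℝ)
    (j : Fin k) : M.mulVec (fun i => N i j) = fun i => (M * N) i j := by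
  funext i
  simp [Matrix.mulVec, Matrix.mul_apply, dotProduct]

lemma trace_self {n d : ℕ} (M : Matrix (Fin n) (Fin d) ℝ) :
    (Mᵀ * M).trace = ∑ i, ∑ j, (M i j) ^ 2 := by
  rw [← frob_sq]
  unfold frobNorm
  rw [Real.sq_sqrt (by positivity)]

lemma trace_tDt {k : ℕ} (μ : Fin k → ℝ) (Y : Matrix (Fin k) (Fin k) ℝ) :
    (Yᵀ * (Matrix.diagonal μ * Y)).trace = ∑ i, μ i * ∑ j, (Y i j) ^ 2 := by
  have hD : ∀ (x j : Fin k), (Matrix.diagonal μ * Y) x j = μ x * Y x j := by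
    intro x j
    simp [Matrix.mul_apply, Matrix.diagonal_apply, Finset.sum_ite_eq]
  simp only [Matrix.trace, Matrix.diag, Matrix.mul_apply, Matrix.transpose_apply, hD]
  rw [Finset.sum_comm]
  congr 1; ext x
  rw [Finset.mul_sum]
  congr 1; ext j
  ring

lemma proj_frob {n d : ℕ} (X : Matrix (Fin n) (Fin d) ℝ) (P : Matrix (Fin d) (Fin d) ℝ)
    (hPt : Pᵀ = P) (hPP : P * P = P) :
    frobNorm (X - X * P) ^ 2 = (Xᵀ * X).trace - (Xᵀ * X * P).trace := by
  rw [frob_sq]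
  have expand : (X - X * P)ᵀ * (X - X * P)
      = Xᵀ * X - Pᵀ * (Xᵀ * X) - Xᵀ * (X * P) + Pᵀ * (Xᵀ * (X * P)) := by
    simp only [Matrix.transpose_sub, Matrix.transpose_mul, Matrix.sub_mul, Matrix.mul_sub,
      Matrix.mul_assoc]
    abel
  rw [expand, Matrix.trace_add, Matrix.trace_sub, Matrix.trace_sub]
  have h1 : (Pᵀ * (Xᵀ * X)).trace = (Xᵀ * X * P).trace := by
    rw [hPt, Matrix.trace_mul_comm]
  have h2 : (Xᵀ * (X * P)).trace = (Xᵀ * X * P).trace := by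
    rw [Matrix.mul_assoc]
  have h3 : (Pᵀ * (Xᵀ * (X * P))).trace = (Xᵀ * X * P).trace := by
    rw [hPt, Matrix.trace_mul_comm]
    rw [Matrix.mul_assoc Xᵀ (X * P) P, Matrix.mul_assoc X P P, hPP, ← Matrix.mul_assoc]
  rw [h1, h2, h3]
  ring

lemma dot_self_nonneg' {d : ℕ} (x : Fin d → ℝ) : 0 ≤ x ⬝ᵥ x :=
  Finset.sum_nonneg fun _ _ => mul_self_nonneg _

lemma specNorm_nonneg {m n : Type*} [Fintype m] [Fintype n] [DecidableEq n]
    (A : Matrix m n ℝ) : 0 ≤ specNorm A := by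
  unfold specNorm; exact norm_nonneg _

set_option maxHeartbeats 1000000 in
/-- if `‖AᵀA − BᵀB‖₂ ≤ α + ‖A − A_k‖_F²/(ℓ−k)`, then the projection of `A`
onto the top-`k` right singular vectors of `B` satisfies
`‖A − π_B^k(A)‖_F² ≤ 2kα + ((ℓ+k)/(ℓ−k))‖A − A_k‖_F²`. -/
theorem stmt19 {n d ℓb ℓ k : ℕ} (hk1 : 1 ≤ k) (hk : k < ℓ) (hℓn : ℓ ≤ n)
    (A : Matrix (Fin n) (Fin d) ℝ) (B : Matrix (Fin ℓb) (Fin d) ℝ)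
    (Ak : Matrix (Fin n) (Fin d) ℝ) (hAk : IsBestRankApprox A Ak k)
    (α : ℝ)
    (hB : specNorm (Aᵀ * A - Bᵀ * B) ≤ α + frobNorm (A - Ak) ^ 2 / ((ℓ : ℝ) - k))
    (V : Matrix (Fin d) (Fin k) ℝ) (μ : Fin k → ℝ)
    (hV : Vᵀ * V = 1)
    (heig : Bᵀ * B * V = V * Matrix.diagonal μ)
    (htop : ∀ x : Fin d → ℝ, Vᵀ.mulVec x = 0 → ∀ j : Fin k,
      x ⬝ᵥ (Bᵀ * B).mulVec x ≤ μ j * (x ⬝ᵥ x)) :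
    frobNorm (A - A * (V * Vᵀ)) ^ 2 ≤
      2 * k * α + (((ℓ : ℝ) + k) / ((ℓ : ℝ) - k)) * frobNorm (A - Ak) ^ 2 := by
  classical
  set ε := specNorm (Aᵀ * A - Bᵀ * B) with hε
  set F2 := frobNorm (A - Ak) ^ 2 with hF2
  have hε0 : (0:ℝ) ≤ ε := by rw [hε]; exact specNorm_nonneg _
  have hlk : (0:ℝ) < (ℓ:ℝ) - k := by
    have : (k:ℝ) < (ℓ:ℝ) := by exact_mod_cast hk
    linarith
  -- V-side projection facts
  have hPt : (V * Vᵀ)ᵀ = V * Vᵀ := by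
    rw [Matrix.transpose_mul, Matrix.transpose_transpose]
  have hPP : (V * Vᵀ) * (V * Vᵀ) = V * Vᵀ := by
    rw [Matrix.mul_assoc, ← Matrix.mul_assoc Vᵀ V Vᵀ, hV, Matrix.one_mul]
  have main0 : frobNorm (A - A * (V * Vᵀ)) ^ 2
      = (Aᵀ * A).trace - (Vᵀ * (Aᵀ * A) * V).trace := by
    rw [proj_frob A (V * Vᵀ) hPt hPP, trace_proj (Aᵀ * A) V]
  have hVcol : ∀ j : Fin k, (fun i => V i j) ⬝ᵥ (fun i => V i j) = 1 := by
    intro j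
    rw [col_dot, hV]
    simp [Matrix.one_apply]
  have hVHV : Vᵀ * (Bᵀ * B) * V = Matrix.diagonal μ := by
    rw [Matrix.mul_assoc, heig, ← Matrix.mul_assoc, hV, Matrix.one_mul]
  have hμ0 : ∀ j, 0 ≤ μ j := by
    intro j
    have h1 : μ j = (Vᵀ * (Bᵀ * B) * V) j j := by
      rw [hVHV]; simp [Matrix.diagonal_apply]
    rw [h1, quad_apply, gram_quad]
    exact dot_self_nonneg' _
  -- Step 1 : lower bound for tr(VᵀGV)
  have hVGV : (Vᵀ * (Bᵀ * B) * V).trace - (k : ℝ) * ε ≤ (Vᵀ * (Aᵀ * A) * V).trace := by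
    have hdiff : Vᵀ * (Aᵀ * A) * V - Vᵀ * (Bᵀ * B) * V = Vᵀ * (Aᵀ * A - Bᵀ * B) * V := by
      rw [Matrix.mul_sub, Matrix.sub_mul]
    have hlow : -((k : ℝ) * ε) ≤ (Vᵀ * (Aᵀ * A - Bᵀ * B) * V).trace := by
      rw [trace_quad]
      have hstep : ∀ j : Fin k, -(ε * 1) ≤ (fun i => V i j) ⬝ᵥ (Aᵀ * A - Bᵀ * B).mulVec
          (fun i => V i j) := by
        intro j
        have h := quad_lower (Aᵀ * A - Bᵀ * B) (fun i => V i j)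
        rw [hVcol j] at h
        exact h
      calc -((k : ℝ) * ε) = ∑ _j : Fin k, -(ε * 1) := by
            rw [Finset.sum_const, Finset.card_univ, Fintype.card_fin, nsmul_eq_mul]; ring
        _ ≤ _ := Finset.sum_le_sum fun j _ => hstep j
    have htr := Matrix.trace_sub (Vᵀ * (Aᵀ * A) * V) (Vᵀ * (Bᵀ * B) * V)
    rw [hdiff] at htr
    linarith [htr ▸ hlow]
  -- W construction
  obtain ⟨w, e, hw_orth, he01, hw_span⟩ := exists_proj_basis Ak hAk.1
  set W : Matrix (Fin d) (Fin k) ℝ := Matrix.of (fun i j => w j i) with hWdef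
  have hcolW : ∀ j, (fun i => W i j) = w j := fun j => rfl
  have hWtW : Wᵀ * W = Matrix.diagonal e := by
    ext i j
    rw [Matrix.diagonal_apply, ← hw_orth i j]
    simp [Matrix.mul_apply, dotProduct, hWdef, mul_comm]
  have hwe : ∀ j, e j = 0 → w j = 0 := by
    intro j hj
    have h := hw_orth j j
    rw [if_pos rfl, hj] at h
    exact dotProduct_self_eq_zero.mp h
  have hWe : W * Matrix.diagonal e = W := by
    ext i j
    rw [Matrix.mul_apply]
    rw [Finset.sum_eq_single j (by intro b _ hb; simp [Matrix.diagonal_apply, hb]) (by simp)]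
    rcases he01 j with h | h
    · rw [Matrix.diagonal_apply_eq, h, mul_zero]
      have := congrFun (hwe j h) i
      simpa [hWdef] using this.symm
    · rw [Matrix.diagonal_apply_eq, h, mul_one]
  have hQt : (W * Wᵀ)ᵀ = W * Wᵀ := by
    rw [Matrix.transpose_mul, Matrix.transpose_transpose]
  have hQQ : (W * Wᵀ) * (W * Wᵀ) = W * Wᵀ := by
    rw [Matrix.mul_assoc, ← Matrix.mul_assoc Wᵀ W Wᵀ, hWtW, ← Matrix.mul_assoc, hWe]
  have hAkQ : Ak * (W * Wᵀ) = Ak := by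
    ext i0 j
    have h := congrFun (hw_span i0) j
    simp only [Finset.sum_apply, Pi.smul_apply, smul_eq_mul] at h
    rw [Matrix.mul_apply]
    simp only [Matrix.mul_apply, hWdef, Matrix.of_apply, Matrix.transpose_apply]
    simp only [Finset.mul_sum]
    rw [Finset.sum_comm]
    rw [← h]
    apply Finset.sum_congr rfl
    intro p _
    rw [dotProduct, Finset.sum_mul]
    apply Finset.sum_congr rfl
    intro m _
    ring
  -- Ky Fan block
  set Y := Vᵀ * W with hY
  set Z := W - V * Y with hZdef
  have hVZ : Vᵀ * Z = 0 := by
    rw [hZdef, Matrix.mul_sub, ← Matrix.mul_assoc, hV, Matrix.one_mul, sub_self]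
  have hZV : Zᵀ * V = 0 := by
    have h := congrArg Matrix.transpose hVZ
    simpa [Matrix.transpose_mul] using h
  have hdecomp : W = V * Y + Z := by
    rw [hZdef]; abel
  have hVH : Vᵀ * (Bᵀ * B) = Matrix.diagonal μ * Vᵀ := by
    have hsym : (Bᵀ * B)ᵀ = Bᵀ * B := by
      rw [Matrix.transpose_mul, Matrix.transpose_transpose]
    calc Vᵀ * (Bᵀ * B) = ((Bᵀ * B) * V)ᵀ := by rw [Matrix.transpose_mul, hsym]
      _ = (V * Matrix.diagonal μ)ᵀ := by rw [heig]
      _ = Matrix.diagonal μ * Vᵀ := by rw [Matrix.transpose_mul, Matrix.diagonal_transpose]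
  have hHW : (Bᵀ * B) * W = V * (Matrix.diagonal μ * Y) + (Bᵀ * B) * Z := by
    conv_lhs => rw [hdecomp]
    rw [Matrix.mul_add, ← Matrix.mul_assoc, heig, Matrix.mul_assoc]
  have hWHW_mat : Wᵀ * (Bᵀ * B) * W = Yᵀ * (Matrix.diagonal μ * Y) + Zᵀ * ((Bᵀ * B) * Z) := by
    rw [Matrix.mul_assoc, hHW, Matrix.mul_add]
    have h1 : Wᵀ * (V * (Matrix.diagonal μ * Y)) = Yᵀ * (Matrix.diagonal μ * Y) := by
      conv_lhs => rw [hdecomp]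
      rw [Matrix.transpose_add, Matrix.add_mul, Matrix.transpose_mul]
      rw [Matrix.mul_assoc Yᵀ Vᵀ _, ← Matrix.mul_assoc Vᵀ V _, hV, Matrix.one_mul]
      rw [← Matrix.mul_assoc Zᵀ V _, hZV, Matrix.zero_mul, add_zero]
    have h2 : Wᵀ * ((Bᵀ * B) * Z) = Zᵀ * ((Bᵀ * B) * Z) := by
      conv_lhs => rw [hdecomp]
      rw [Matrix.transpose_add, Matrix.add_mul, Matrix.transpose_mul]
      rw [Matrix.mul_assoc Yᵀ Vᵀ _, ← Matrix.mul_assoc Vᵀ _ _, hVH,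
        Matrix.mul_assoc (Matrix.diagonal μ) Vᵀ Z, hVZ, Matrix.mul_zero, Matrix.mul_zero,
        zero_add]
    rw [h1, h2]
  have hWtW2 : Wᵀ * W = Yᵀ * Y + Zᵀ * Z := by
    conv_lhs => rw [hdecomp]
    rw [Matrix.transpose_add, Matrix.add_mul, Matrix.mul_add, Matrix.mul_add,
      Matrix.transpose_mul]
    rw [Matrix.mul_assoc Yᵀ Vᵀ _, ← Matrix.mul_assoc Vᵀ V Y, hV, Matrix.one_mul]
    rw [Matrix.mul_assoc Yᵀ Vᵀ Z, hVZ, Matrix.mul_zero, add_zero]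
    rw [← Matrix.mul_assoc Zᵀ V Y, hZV, Matrix.zero_mul, zero_add]
  -- s values
  set s : Fin k → ℝ := fun i => ∑ j, (Y i j) ^ 2 with hs
  have hs0 : ∀ i, 0 ≤ s i := fun i => Finset.sum_nonneg fun j _ => sq_nonneg _
  have hs1 : ∀ i, s i ≤ 1 := by
    intro i
    have hYij : ∀ j, Y i j = (fun m => V m i) ⬝ᵥ w j := by
      intro j
      simp [hY, Matrix.mul_apply, dotProduct, hWdef]
    have hb := bessel_aux w e hw_orth he01 (fun m => V m i)
    rw [hVcol i] at hb
    calc s i = ∑ j, ((fun m => V m i) ⬝ᵥ w j) ^ 2 := by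
          rw [hs]; exact Finset.sum_congr rfl fun j _ => by rw [hYij j]
      _ ≤ 1 := hb
  have htrYY : (Yᵀ * Y).trace = ∑ i, s i := by
    rw [trace_self, hs]
  have htrZZ0 : 0 ≤ (Zᵀ * Z).trace := trace_conj_nonneg Z
  have htre : (Wᵀ * W).trace = ∑ j, e j := by
    rw [hWtW, Matrix.trace_diagonal]
  have htre_le : ∑ j, e j ≤ (k : ℝ) := by
    calc ∑ j, e j ≤ ∑ _j : Fin k, (1:ℝ) := Finset.sum_le_sum fun j _ => by
          rcases he01 j with h | h <;> rw [h] <;> norm_num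
      _ = (k : ℝ) := by simp
  have hsum_split : ∑ i, s i + (Zᵀ * Z).trace = ∑ j, e j := by
    rw [← htrYY, ← htre, hWtW2, Matrix.trace_add]
  -- minimum of μ
  obtain ⟨i0, _, hmin⟩ := Finset.exists_min_image Finset.univ μ
    ⟨⟨0, hk1⟩, Finset.mem_univ _⟩
  have hZHZ : (Zᵀ * (Bᵀ * B) * Z).trace ≤ μ i0 * (Zᵀ * Z).trace := by
    have htrZZ : (Zᵀ * Z).trace = ∑ j : Fin k, (fun i => Z i j) ⬝ᵥ (fun i => Z i j) := by
      have h := trace_quad (1 : Matrix (Fin d) (Fin d) ℝ) Z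
      rw [Matrix.mul_one] at h
      rw [h]
      exact Finset.sum_congr rfl fun j _ => by rw [Matrix.one_mulVec]
    rw [trace_quad, htrZZ, Finset.mul_sum]
    apply Finset.sum_le_sum
    intro j _
    apply htop
    rw [col_mulVec Vᵀ Z j, hVZ]
    funext i
    simp
  have kf : (Wᵀ * (Bᵀ * B) * W).trace ≤ ∑ i, μ i := by
    have h1 : (Wᵀ * (Bᵀ * B) * W).trace
        = ∑ i, μ i * s i + (Zᵀ * ((Bᵀ * B) * Z)).trace := by
      rw [hWHW_mat, Matrix.trace_add, trace_tDt]
    have h1' : (Zᵀ * ((Bᵀ * B) * Z)).trace = (Zᵀ * (Bᵀ * B) * Z).trace := by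
      rw [← Matrix.mul_assoc]
    have h2 : μ i0 * (Zᵀ * Z).trace ≤ μ i0 * ((k : ℝ) - ∑ i, s i) := by
      apply mul_le_mul_of_nonneg_left _ (hμ0 i0)
      linarith
    have h3 : μ i0 * ((k : ℝ) - ∑ i, s i) ≤ ∑ i, μ i * (1 - s i) := by
      have heq : μ i0 * ((k : ℝ) - ∑ i, s i) = ∑ i : Fin k, μ i0 * (1 - s i) := by
        rw [← Finset.mul_sum]
        congr 1
        rw [Finset.sum_sub_distrib]
        simp
      rw [heq]
      apply Finset.sum_le_sum
      intro i _
      exact mul_le_mul_of_nonneg_right (hmin i (Finset.mem_univ i)) (by linarith [hs1 i])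
    have h4 : ∑ i, μ i * s i + ∑ i, μ i * (1 - s i) = ∑ i, μ i := by
      rw [← Finset.sum_add_distrib]
      exact Finset.sum_congr rfl fun i _ => by ring
    linarith [h1, h1' ▸ hZHZ]
  -- W-side spectral step
  have hWGW : (Wᵀ * (Aᵀ * A) * W).trace ≤ (Wᵀ * (Bᵀ * B) * W).trace + (k : ℝ) * ε := by
    have hdiff : Wᵀ * (Aᵀ * A) * W - Wᵀ * (Bᵀ * B) * W = Wᵀ * (Aᵀ * A - Bᵀ * B) * W := by
      rw [Matrix.mul_sub, Matrix.sub_mul]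
    have hup : (Wᵀ * (Aᵀ * A - Bᵀ * B) * W).trace ≤ (k : ℝ) * ε := by
      rw [trace_quad]
      have hstep : ∀ j : Fin k, (fun i => W i j) ⬝ᵥ (Aᵀ * A - Bᵀ * B).mulVec (fun i => W i j)
          ≤ ε * e j := by
        intro j
        have h := specNorm_quad_le (Aᵀ * A - Bᵀ * B) (fun i => W i j)
        have hcol : (fun i => W i j) ⬝ᵥ (fun i => W i j) = e j := by
          rw [hcolW j]
          have := hw_orth j j
          rw [if_pos rfl] at this
          exact this
        rw [hcol] at h
        exact h
      calc ∑ j : Fin k, (fun i => W i j) ⬝ᵥ (Aᵀ * A - Bᵀ * B).mulVec (fun i => W i j)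
          ≤ ∑ j, ε * e j := Finset.sum_le_sum fun j _ => hstep j
        _ = ε * ∑ j, e j := by rw [Finset.mul_sum]
        _ ≤ ε * (k : ℝ) := mul_le_mul_of_nonneg_left htre_le hε0
        _ = (k : ℝ) * ε := by ring
    have htr := Matrix.trace_sub (Wᵀ * (Aᵀ * A) * W) (Wᵀ * (Bᵀ * B) * W)
    rw [hdiff] at htr
    linarith [htr ▸ hup]
  -- Step 2 : residual bound
  have hsplit : (Aᵀ * A).trace - ((Aᵀ * A) * (W * Wᵀ)).trace ≤ F2 := by
    have hN : A - A * (W * Wᵀ) = (A - Ak) - (A - Ak) * (W * Wᵀ) := by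
      rw [Matrix.sub_mul, hAkQ]
      abel
    have h1 : frobNorm (A - A * (W * Wᵀ)) ^ 2
        = (Aᵀ * A).trace - ((Aᵀ * A) * (W * Wᵀ)).trace := by
      have := proj_frob A (W * Wᵀ) hQt hQQ
      rw [this]
    have h2 : frobNorm ((A - Ak) - (A - Ak) * (W * Wᵀ)) ^ 2
        = ((A - Ak)ᵀ * (A - Ak)).trace - ((A - Ak)ᵀ * (A - Ak) * (W * Wᵀ)).trace :=
      proj_frob (A - Ak) (W * Wᵀ) hQt hQQ
    have h3 : 0 ≤ ((A - Ak)ᵀ * (A - Ak) * (W * Wᵀ)).trace := by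
      rw [trace_proj]
      have heq : Wᵀ * ((A - Ak)ᵀ * (A - Ak)) * W = ((A - Ak) * W)ᵀ * ((A - Ak) * W) := by
        rw [Matrix.transpose_mul]
        simp [Matrix.mul_assoc]
      rw [heq]
      exact trace_conj_nonneg _
    have hF2' : F2 = ((A - Ak)ᵀ * (A - Ak)).trace := by
      rw [hF2, frob_sq]
    rw [← h1, hN, h2]
    linarith
  -- assemble
  have htrVHV : (Vᵀ * (Bᵀ * B) * V).trace = ∑ i, μ i := by
    rw [hVHV, Matrix.trace_diagonal]
  have htrQ : ((Aᵀ * A) * (W * Wᵀ)).trace = (Wᵀ * (Aᵀ * A) * W).trace := trace_proj _ W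
  have core : frobNorm (A - A * (V * Vᵀ)) ^ 2 ≤ F2 + 2 * (k : ℝ) * ε := by
    rw [main0]
    linarith [hVGV, htrVHV ▸ hVGV, kf, hWGW, hsplit, htrQ, htrVHV]
  have hεb : ε ≤ α + F2 / ((ℓ : ℝ) - k) := hB
  have h2k : (0:ℝ) ≤ 2 * (k : ℝ) := by positivity
  calc frobNorm (A - A * (V * Vᵀ)) ^ 2 ≤ F2 + 2 * (k : ℝ) * ε := core
    _ ≤ F2 + 2 * (k : ℝ) * (α + F2 / ((ℓ : ℝ) - k)) := by nlinarith
    _ = 2 * (k : ℝ) * α + (((ℓ : ℝ) + k) / ((ℓ : ℝ) - k)) * F2 := by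
        field_simp
        ring
end
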